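/- arXiv:1305.4495 — 4 statements merged into one kernel-verified Lean document; each statement's English description precedes it below -/
import Mathlib

section
/- Let P ∈ ℂ[x_1,…,x_n] be a polynomial with P = P_1 ⋯ P_k for polynomials P_1,…,P_k ∈ ℂ[x_1,…,x_n], and let K ⊆ ℝ^n be compact. Then the induced operator P(D) : ℰ(K) → ℰ(K) admits a continuous linear right inverse if and only if for every j ∈ {1,…,k} the induced operator P_j(D) : ℰ(K) → ℰ(K) admits a continuous linear right inverse. -/
/-
Common setup: the space `C^∞(ℝⁿ,ℂ)` of smooth complex-valued functions on `ℝⁿ`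
with the Fréchet topology of uniform convergence of all partial derivatives on
compact sets, the ideal `𝓘_K` of functions flat on a compact set `K`, and the
space of Whitney functions `ℰ(K) = C^∞(ℝⁿ,ℂ)/𝓘_K` with the quotient topology.
-/

noncomputable section
open scoped ContDiff

abbrev Rn (n : ℕ) : Type := Fin n → ℝ

/-- The partial derivative `D_j = ∂/∂x_j` of a complex-valued function on `ℝⁿ`. -/
def pd (n : ℕ) (j : Fin n) (F : Rn n → ℂ) : Rn n → ℂ :=
  fun x => fderiv ℝ F x (Pi.single j 1)

lemma contDiff_pd {n : ℕ} (j : Fin n) {F : Rn n → ℂ} (hF : ContDiff ℝ ∞ F) :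
    ContDiff ℝ ∞ (pd n j F) :=
  (hF.fderiv_right (le_refl _)).clm_apply contDiff_const

/-- The submodule of functions in `ℝⁿ → ℂ` which are `C^∞`-smooth. -/
def SmoothSub (n : ℕ) : Submodule ℂ (Rn n → ℂ) where
  carrier := {F | ContDiff ℝ ∞ F}
  add_mem' := by
    intro a b ha hb
    simp only [Set.mem_setOf_eq] at *
    exact ha.add hb
  zero_mem' := by
    simp only [Set.mem_setOf_eq]
    exact contDiff_const
  smul_mem' := by
    intro c F hF
    simp only [Set.mem_setOf_eq] at *
    exact hF.const_smul c

/-- The space `C^∞(ℝⁿ,ℂ)` of smooth complex-valued functions on `ℝⁿ`. -/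
abbrev SmoothFun (n : ℕ) : Type := ↥(SmoothSub n)

lemma SmoothFun.smooth {n : ℕ} (F : SmoothFun n) : ContDiff ℝ ∞ F.1 := F.2

lemma SmoothFun.smoothNat {n : ℕ} (F : SmoothFun n) (k : ℕ) : ContDiff ℝ k F.1 :=
  F.smooth.of_le (by exact_mod_cast le_top)

/-- The Fréchet topology on `C^∞(ℝⁿ,ℂ)` of uniform convergence of all
derivatives on compact subsets of `ℝⁿ`. -/
instance smoothFunTopology (n : ℕ) : TopologicalSpace (SmoothFun n) :=
  TopologicalSpace.induced
    (fun F : SmoothFun n => fun k : ℕ =>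
      UniformOnFun.ofFun {K : Set (Rn n) | IsCompact K} (iteratedFDeriv ℝ k F.1))
    inferInstance

/-- `F` is flat on `K`: all derivatives of `F` vanish at every point of `K`. -/
def FlatOn (n : ℕ) (F : Rn n → ℂ) (K : Set (Rn n)) : Prop :=
  ∀ (k : ℕ), ∀ x ∈ K, iteratedFDeriv ℝ k F x = 0

/-- The ideal `𝓘_K` of smooth functions flat on `K`. -/
def IdealK (n : ℕ) (K : Set (Rn n)) : Submodule ℂ (SmoothFun n) where
  carrier := {F | FlatOn n F.1 K}
  zero_mem' := by
    intro k x _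
    show iteratedFDeriv ℝ k (fun _ => (0:ℂ)) x = 0
    rw [iteratedFDeriv_zero_fun]; rfl
  add_mem' := by
    intro F G hF hG k x hx
    show iteratedFDeriv ℝ k (F.1 + G.1) x = 0
    rw [iteratedFDeriv_add_apply (F.smoothNat k).contDiffAt (G.smoothNat k).contDiffAt, hF k x hx, hG k x hx, add_zero]
  smul_mem' := by
    intro c F hF k x hx
    show iteratedFDeriv ℝ k (c • F.1) x = 0
    rw [iteratedFDeriv_const_smul_apply (F.smoothNat k).contDiffAt, hF k x hx, smul_zero]

/-- The space of Whitney functions `ℰ(K) = C^∞(ℝⁿ,ℂ)/𝓘_K`, a quotient vector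
space carrying the quotient topology. -/
abbrev WhitneyE (n : ℕ) (K : Set (Rn n)) : Type := SmoothFun n ⧸ IdealK n K

/-- The iterated partial derivative `D^α = D_1^{α_1} ⋯ D_n^{α_n}` for a
multi-index `α ∈ ℕ₀ⁿ`. -/
def Dalpha (n : ℕ) (α : Fin n → ℕ) (F : Rn n → ℂ) : Rn n → ℂ :=
  (List.finRange n).foldr (fun j G => (pd n j)^[α j] G) F

lemma contDiff_iter_pd {n : ℕ} (j : Fin n) (m : ℕ) {F : Rn n → ℂ} (hF : ContDiff ℝ ∞ F) :
    ContDiff ℝ ∞ ((pd n j)^[m] F) := by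
  induction m generalizing F with
  | zero => simpa using hF
  | succ m ih =>
      rw [Function.iterate_succ_apply]
      exact ih (contDiff_pd j hF)

lemma contDiff_Dalpha {n : ℕ} (α : Fin n → ℕ) {F : Rn n → ℂ} (hF : ContDiff ℝ ∞ F) :
    ContDiff ℝ ∞ (Dalpha n α F) := by
  unfold Dalpha
  generalize (List.finRange n) = l
  induction l with
  | nil => simpa using hF
  | cons j l ih => exact contDiff_iter_pd j (α j) ih

/-- The constant-coefficient differential operator `P(D) = Σ_{α} (D^α P(0)/α!) D^α`
associated to a polynomial `P ∈ ℂ[x_1,…,x_n]` (the number `D^α P(0)/α!` is the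
coefficient of the monomial `x^α` in `P`), acting on `C^∞(ℝⁿ,ℂ)`. -/
def PDOp (n : ℕ) (P : MvPolynomial (Fin n) ℂ) (F : SmoothFun n) : SmoothFun n :=
  ⟨fun x => ∑ α ∈ P.support, P.coeff α * Dalpha n (fun j => α j) F.1 x, by
    have h : ContDiff ℝ ∞ fun x => ∑ α ∈ P.support, P.coeff α * Dalpha n (fun j => α j) F.1 x :=
      ContDiff.sum fun α _ => contDiff_const.mul (contDiff_Dalpha _ F.smooth)
    exact h⟩

/-- An operator `T` on `C^∞(ℝⁿ,ℂ)` which maps `𝓘_K` into `𝓘_K` induces an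
operator on `ℰ(K)`; this predicate says that this induced operator on `ℰ(K)`
admits a continuous linear right inverse: there is a continuous linear
`S : ℰ(K) → ℰ(K)` such that applying the induced operator to `S f` (computed on
any representative) gives back `f`. -/
def HasCLRightInv (n : ℕ) (K : Set (Rn n)) (T : SmoothFun n → SmoothFun n) : Prop :=
  ∃ S : WhitneyE n K → WhitneyE n K, Continuous S ∧ IsLinearMap ℂ S ∧
    ∀ (f : WhitneyE n K) (G : SmoothFun n),
      Submodule.Quotient.mk G = S f → (Submodule.Quotient.mk (T G) : WhitneyE n K) = f

/-
The assignment `P ↦ P(D)` is an algebra homomorphism from `ℂ[x₁,…,xₙ]` into the algebra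
generated by the partial derivatives `∂ⱼ`, which is commutative by Schwarz's theorem. Each `∂ⱼ`
is continuous for the Fréchet topology and preserves flatness, so this algebra descends to
continuous operators on `ℰ(K)`, and `P ↦ P(D)` becomes a monoid homomorphism into the
continuous linear endomorphisms of `ℰ(K)`. In a monoid, a product `ab` of commuting elements
has a right inverse iff `a` and `b` do: from `ab s = 1` we get `a (b s) = 1` and `b (a s) = 1`,
and conversely `ab (t t') = 1` when `b t = 1 = a t'`.
-/

theorem MonoidHom.exists_map_prod_mul_eq_one_iff {ι M N : Type*} [CommMonoid M] [Monoid N]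
    (φ : M →* N) (f : ι → M) (s : Finset ι) :
    (∃ b, φ (∏ i ∈ s, f i) * b = 1) ↔ ∀ i ∈ s, ∃ b, φ (f i) * b = 1 := by
  classical
  induction s using Finset.induction_on with
  | empty => exact ⟨fun _ => by simp, fun _ => ⟨1, by simp⟩⟩
  | insert j s hj ih =>
    rw [Finset.prod_insert hj, Finset.forall_mem_insert, ← ih]
    constructor
    · rintro ⟨b, hb⟩
      refine ⟨⟨φ (∏ i ∈ s, f i) * b, by rw [← mul_assoc, ← map_mul, hb]⟩, φ (f j) * b, ?_⟩
      rw [← mul_assoc, ← map_mul, mul_comm, hb]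
    · rintro ⟨⟨b, hb⟩, c, hc⟩
      exact ⟨c * b, by rw [map_mul, mul_assoc, ← mul_assoc (φ _) c, hc, one_mul, hb]⟩

theorem Submodule.continuous_mapQ {R M : Type*} [Ring R] [AddCommGroup M] [Module R M]
    [TopologicalSpace M] (p : Submodule R M) {f : M →ₗ[R] M} (h : p ≤ p.comap f)
    (hf : Continuous f) : Continuous (p.mapQ p f h) :=
  p.isQuotientMap_mkQ.continuous_iff.2 (p.continuous_mkQ.comp hf)

section

variable {n : ℕ}

/-- `applyLastL v k T = T(·, …, ·, v)`. -/
def applyLastL (v : Rn n) (k : ℕ) :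
    ContinuousMultilinearMap ℝ (fun _ : Fin (k + 1) => Rn n) ℂ →L[ℝ]
      ContinuousMultilinearMap ℝ (fun _ : Fin k => Rn n) ℂ :=
  (ContinuousLinearMap.apply ℝ ℂ v).compContinuousMultilinearMapL ℝ _ _ _ ∘L
    ((continuousMultilinearCurryRightEquiv' ℝ k (Rn n) ℂ).toContinuousLinearEquiv :
      _ →L[ℝ] _)

lemma iteratedFDeriv_pd {F : Rn n → ℂ} (hF : ContDiff ℝ ∞ F) (j : Fin n) (k : ℕ) :
    iteratedFDeriv ℝ k (pd n j F) =
      applyLastL (Pi.single j 1) k ∘ iteratedFDeriv ℝ (k + 1) F := by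
  funext x
  have hpd : pd n j F = ContinuousLinearMap.apply ℝ ℂ (Pi.single j 1) ∘ fderiv ℝ F := rfl
  have hdF : ContDiff ℝ ∞ (fderiv ℝ F) := hF.fderiv_right le_rfl
  rw [hpd, ContinuousLinearMap.iteratedFDeriv_comp_left _ hdF.contDiffAt
    (by exact_mod_cast le_top), Function.comp_apply, iteratedFDeriv_succ_eq_comp_right]
  simp [applyLastL]

lemma flatOn_pd {F : Rn n → ℂ} (hF : ContDiff ℝ ∞ F) (j : Fin n) {K : Set (Rn n)}
    (hflat : FlatOn n F K) : FlatOn n (pd n j F) K := by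
  intro k x hx
  rw [iteratedFDeriv_pd hF, Function.comp_apply, hflat (k + 1) x hx, map_zero]

lemma pd_pd {F : Rn n → ℂ} (hF : ContDiff ℝ ∞ F) (i j : Fin n) (x : Rn n) :
    pd n i (pd n j F) x = fderiv ℝ (fderiv ℝ F) x (Pi.single i 1) (Pi.single j 1) := by
  have hdF : ContDiff ℝ ∞ (fderiv ℝ F) := hF.fderiv_right le_rfl
  show fderiv ℝ (fun y => fderiv ℝ F y (Pi.single j 1)) x (Pi.single i 1) = _
  rw [fderiv_clm_apply (hdF.differentiable (by decide) x) (differentiableAt_const _)]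
  simp

lemma pd_comm {F : Rn n → ℂ} (hF : ContDiff ℝ ∞ F) (i j : Fin n) :
    pd n i (pd n j F) = pd n j (pd n i F) := by
  funext x
  rw [pd_pd hF i j x, pd_pd hF j i x]
  exact hF.contDiffAt.isSymmSndFDerivAt (by simp; exact WithTop.coe_le_coe.2 le_top) _ _

abbrev JetSpace (n : ℕ) : Type :=
  (k : ℕ) → UniformOnFun (Rn n) (ContinuousMultilinearMap ℝ (fun _ : Fin k => Rn n) ℂ)
    {K | IsCompact K}

def jet : SmoothFun n →ₗ[ℂ] JetSpace n where
  toFun F k := UniformOnFun.ofFun _ (iteratedFDeriv ℝ k F.1)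
  map_add' F G := by
    funext k x
    exact iteratedFDeriv_add_apply (F.smoothNat k).contDiffAt (G.smoothNat k).contDiffAt
  map_smul' c F := by
    funext k x
    exact iteratedFDeriv_const_smul_apply (F.smoothNat k).contDiffAt

lemma isInducing_jet : Topology.IsInducing (jet : SmoothFun n → JetSpace n) := ⟨rfl⟩

instance : IsTopologicalAddGroup (SmoothFun n) :=
  Topology.IsInducing.topologicalAddGroup jet isInducing_jet

instance : ContinuousConstSMul ℂ (SmoothFun n) :=
  Topology.IsInducing.continuousConstSMul isInducing_jet id (map_smul jet _ _)

def pdL (j : Fin n) : Module.End ℂ (SmoothFun n) where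
  toFun F := ⟨pd n j F.1, contDiff_pd j F.2⟩
  map_add' F G := by
    ext x
    exact congrArg (· (Pi.single j 1))
      (fderiv_add (F.smooth.differentiable (by simp) x) (G.smooth.differentiable (by simp) x))
  map_smul' c F := by
    ext x
    exact congrArg (· (Pi.single j 1))
      (fderiv_const_smul (F.smooth.differentiable (by simp) x) c)

lemma commute_pdL (i j : Fin n) : Commute (pdL i) (pdL j) :=
  LinearMap.ext fun F => Subtype.ext (pd_comm F.smooth i j)

lemma continuous_pdL (j : Fin n) : Continuous (pdL j) := by
  refine isInducing_jet.continuous_iff.2 (continuous_pi fun k => ?_)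
  have hjet : (fun F => jet (pdL j F) k) =
      (UniformOnFun.ofFun _ ∘ (applyLastL (Pi.single j 1) k ∘ ·) ∘ UniformOnFun.toFun _) ∘
        (fun F : SmoothFun n => jet F (k + 1)) := by
    funext F
    exact congrArg (UniformOnFun.ofFun _) (iteratedFDeriv_pd F.smooth j k)
  simp only [Function.comp_apply, hjet]
  exact (UniformOnFun.postcomp_uniformContinuous (applyLastL _ k).uniformContinuous).continuous
    |>.comp ((continuous_apply (k + 1)).comp isInducing_jet.continuous)

lemma pdL_mem_idealK {K : Set (Rn n)} (j : Fin n) {F : SmoothFun n} (hF : F ∈ IdealK n K) :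
    pdL j F ∈ IdealK n K :=
  flatOn_pd F.smooth j hF

lemma iterate_pdL_coe (j : Fin n) (m : ℕ) (F : SmoothFun n) :
    (((pdL j)^[m] F : SmoothFun n) : Rn n → ℂ) = (pd n j)^[m] F := by
  induction m generalizing F with
  | zero => rfl
  | succ m ih => rw [Function.iterate_succ_apply, Function.iterate_succ_apply, ih]; rfl

lemma Dalpha_eq (α : Fin n → ℕ) (F : SmoothFun n) :
    Dalpha n α F = ((((List.finRange n).map fun j => pdL j ^ α j).prod F : SmoothFun n) :
      Rn n → ℂ) := by
  unfold Dalpha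
  induction (List.finRange n) with
  | nil => rfl
  | cons j l ih =>
    rw [List.foldr_cons, ih, List.map_cons, List.prod_cons, Module.End.mul_apply,
      Module.End.pow_apply, iterate_pdL_coe]

abbrev DiffOpAlg (n : ℕ) : Subalgebra ℂ (Module.End ℂ (SmoothFun n)) :=
  Algebra.adjoin ℂ (Set.range pdL)

instance : IsMulCommutative (DiffOpAlg n) :=
  Algebra.isMulCommutative_adjoin ℂ (by rintro _ ⟨i, rfl⟩ _ ⟨j, rfl⟩; exact commute_pdL i j)

open scoped IsMulCommutative

open MvPolynomial in
def diffOp : MvPolynomial (Fin n) ℂ →ₐ[ℂ] DiffOpAlg n :=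
  aeval fun j => ⟨pdL j, Algebra.subset_adjoin ⟨j, rfl⟩⟩

lemma coe_diffOp (P : MvPolynomial (Fin n) ℂ) :
    (diffOp P : Module.End ℂ (SmoothFun n)) =
      ∑ α ∈ P.support, P.coeff α • ((List.finRange n).map fun j => pdL j ^ α j).prod := by
  rw [diffOp, MvPolynomial.aeval_eq_eval₂Hom, MvPolynomial.coe_eval₂Hom, MvPolynomial.eval₂_eq']
  simp [Fin.prod_univ_def, Algebra.smul_def, Function.comp_def]

lemma PDOp_eq_diffOp (P : MvPolynomial (Fin n) ℂ) (F : SmoothFun n) :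
    PDOp n P F = (diffOp P : Module.End ℂ (SmoothFun n)) F := by
  ext x
  simp [PDOp, coe_diffOp, Dalpha_eq]

lemma idealK_le_comap_of_mem_diffOpAlg (K : Set (Rn n)) {T : Module.End ℂ (SmoothFun n)}
    (hT : T ∈ DiffOpAlg n) : IdealK n K ≤ (IdealK n K).comap T := by
  induction hT using Algebra.adjoin_induction with
  | mem _ hT => obtain ⟨j, rfl⟩ := hT; exact fun _ => pdL_mem_idealK j
  | algebraMap c => exact fun F hF => (IdealK n K).smul_mem c hF
  | add S T _ _ hS hT => exact fun F hF => (IdealK n K).add_mem (hS hF) (hT hF)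
  | mul S T _ _ hS hT => exact fun F hF => hS (hT hF)

lemma continuous_of_mem_diffOpAlg {T : Module.End ℂ (SmoothFun n)} (hT : T ∈ DiffOpAlg n) :
    Continuous T := by
  induction hT using Algebra.adjoin_induction with
  | mem _ hT => obtain ⟨j, rfl⟩ := hT; exact continuous_pdL j
  | algebraMap c => exact continuous_const_smul c
  | add S T _ _ hS hT => exact hS.add hT
  | mul S T _ _ hS hT => exact hS.comp hT

def whitneyOp (K : Set (Rn n)) : DiffOpAlg n →* (WhitneyE n K →L[ℂ] WhitneyE n K) where
  toFun T := ⟨(IdealK n K).mapQ (IdealK n K) T (idealK_le_comap_of_mem_diffOpAlg K T.2),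
    (IdealK n K).continuous_mapQ _ (continuous_of_mem_diffOpAlg T.2)⟩
  map_one' := by ext F; induction F using Submodule.Quotient.induction_on; rfl
  map_mul' S T := by ext F; induction F using Submodule.Quotient.induction_on; rfl

lemma whitneyOp_mk (K : Set (Rn n)) (T : DiffOpAlg n) (F : SmoothFun n) :
    whitneyOp K T (Submodule.Quotient.mk F) =
      Submodule.Quotient.mk ((T : Module.End ℂ (SmoothFun n)) F) := rfl

lemma hasCLRightInv_iff {K : Set (Rn n)} {P : MvPolynomial (Fin n) ℂ} :
    HasCLRightInv n K (PDOp n P) ↔ ∃ S, whitneyOp K (diffOp P) * S = 1 := by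
  constructor
  · rintro ⟨S, hcont, hlin, hS⟩
    refine ⟨⟨hlin.mk' S, hcont⟩, ContinuousLinearMap.ext fun f => ?_⟩
    obtain ⟨G, hG⟩ := Submodule.Quotient.mk_surjective _ (S f)
    change whitneyOp K (diffOp P) (S f) = f
    rw [← hG, whitneyOp_mk, ← PDOp_eq_diffOp]
    exact hS f G hG
  · rintro ⟨S, hS⟩
    refine ⟨S, S.continuous, S.toLinearMap.isLinear, fun f G hG => ?_⟩
    rw [PDOp_eq_diffOp, ← whitneyOp_mk, hG]
    exact congrArg (· f) hS

end

theorem stmt2_general (n k : ℕ) (P : MvPolynomial (Fin n) ℂ) (Ps : Fin k → MvPolynomial (Fin n) ℂ)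
    (hP : P = ∏ j, Ps j) (K : Set (Rn n)) :
    HasCLRightInv n K (PDOp n P) ↔ ∀ j : Fin k, HasCLRightInv n K (PDOp n (Ps j)) := by
  simp only [hasCLRightInv_iff, hP]
  simpa using ((whitneyOp K).comp diffOp.toMonoidHom).exists_map_prod_mul_eq_one_iff Ps .univ

/-- If `P = P_1 ⋯ P_k` and `K ⊆ ℝⁿ` is compact, then
`P(D) : ℰ(K) → ℰ(K)` admits a continuous linear right inverse iff every
`P_j(D) : ℰ(K) → ℰ(K)` does. -/
theorem stmt2 (n k : ℕ) (P : MvPolynomial (Fin n) ℂ) (Ps : Fin k → MvPolynomial (Fin n) ℂ)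
    (hP : P = ∏ j, Ps j) (K : Set (Rn n)) (hK : IsCompact K) :
    HasCLRightInv n K (PDOp n P) ↔ ∀ j : Fin k, HasCLRightInv n K (PDOp n (Ps j)) :=
  stmt2_general n k P Ps hP K
end
end

section
/- Let j ∈ {1,…,n} and λ ∈ ℂ. Then for every F ∈ C^∞(ℝ^n,ℂ), the function S̃_{j,λ}F is smooth and (D_j − λ)(S̃_{j,λ}F) = F; that is, S̃_{j,λ} is a linear right inverse for the operator D_j − λ : C^∞(ℝ^n,ℂ) → C^∞(ℝ^n,ℂ). -/
/-
Common setup: the space `C^∞(ℝⁿ,ℂ)` of smooth complex-valued functions on `ℝⁿ`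
with the Fréchet topology of uniform convergence of all partial derivatives on
compact sets, the ideal `𝓘_K` of functions flat on a compact set `K`, and the
space of Whitney functions `ℰ(K) = C^∞(ℝⁿ,ℂ)/𝓘_K` with the quotient topology.
-/

noncomputable section
open scoped ContDiff

/-- The operator `S̃_{j,λ}`:
`(S̃_{j,λ}F)(x) = ∫_0^{x_j} F(x^{(j,t)}) e^{λ(x_j - t)} dt`, where
`x^{(j,t)} = (x_1,…,x_{j-1},t,x_{j+1},…,x_n)`. -/
def Stilde (n : ℕ) (j : Fin n) (lam : ℂ) (F : Rn n → ℂ) : Rn n → ℂ :=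
  fun x => ∫ t in (0:ℝ)..(x j), F (Function.update x j t) * Complex.exp (lam * (x j - t))

/-
Substituting `t = x_j s` turns `S̃_{j,λ}F` into an integral over the fixed interval `[0,1]` of a
jointly smooth integrand, so it is smooth by differentiation under the integral sign. On the
`j`-th coordinate line through `x` it equals `s ↦ e^{λs} ∫_0^s F(x^{(j,t)}) e^{-λt} dt`, whose
derivative is `λ S̃_{j,λ}F + F` by the product rule and the fundamental theorem of calculus.
-/

open intervalIntegral Function

universe u

section ParametricIntegral

-- `P` and `G` share a universe so that the induction below can pass from `G` to `P →L[ℝ] G`.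
variable {P G : Type u} [NormedAddCommGroup P] [NormedSpace ℝ P] [ProperSpace P]
  [NormedAddCommGroup G] [NormedSpace ℝ G] {a b : ℝ}

theorem hasFDerivAt_intervalIntegral_of_contDiff {ψ : P × ℝ → G} (hψ : ContDiff ℝ 1 ψ)
    (p₀ : P) :
    HasFDerivAt (fun p => ∫ s in a..b, ψ (p, s))
      (∫ s in a..b, (fderiv ℝ ψ (p₀, s)).comp (ContinuousLinearMap.inl ℝ P ℝ)) p₀ := by
  have hψ' : Continuous fun q => (fderiv ℝ ψ q).comp (ContinuousLinearMap.inl ℝ P ℝ) :=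
    (hψ.continuous_fderiv one_ne_zero).clm_comp continuous_const
  obtain ⟨C, hC⟩ := ((isCompact_closedBall p₀ 1).prod (isCompact_uIcc (a := a) (b := b)))
    |>.exists_bound_of_continuousOn hψ'.continuousOn
  refine hasFDerivAt_integral_of_dominated_of_fderiv_le (μ := MeasureTheory.volume)
    (F := fun p s => ψ (p, s))
    (F' := fun p s => (fderiv ℝ ψ (p, s)).comp (ContinuousLinearMap.inl ℝ P ℝ))
    (bound := fun _ => C) (Metric.ball_mem_nhds p₀ one_pos) ?_ ?_ ?_ ?_ intervalIntegrable_const ?_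
  · exact .of_forall fun p =>
      (hψ.continuous.comp (Continuous.prodMk_right p)).aestronglyMeasurable
  · exact (hψ.continuous.comp (Continuous.prodMk_right p₀)).intervalIntegrable _ _
  · exact (hψ'.comp (Continuous.prodMk_right p₀)).aestronglyMeasurable
  · exact .of_forall fun t ht p hp =>
      hC (p, t) ⟨Metric.ball_subset_closedBall hp, Set.Ioc_subset_Icc_self ht⟩
  · exact .of_forall fun t _ p _ =>
      (hψ.differentiable one_ne_zero (p, t)).hasFDerivAt.comp p (hasFDerivAt_prodMk_left p t)

theorem contDiff_intervalIntegral_of_contDiff {ψ : P × ℝ → G} (hψ : ContDiff ℝ ∞ ψ) :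
    ContDiff ℝ ∞ fun p => ∫ s in a..b, ψ (p, s) := by
  rw [contDiff_infty]
  intro k
  induction k generalizing G with
  | zero =>
    exact contDiff_zero.2 (continuous_iff_continuousAt.2 fun p =>
      (hasFDerivAt_intervalIntegral_of_contDiff (hψ.of_le (by simp)) p).continuousAt)
  | succ k ih =>
    rw [Nat.cast_succ, contDiff_succ_iff_hasFDerivAt]
    exact ⟨_, ih ((hψ.fderiv_right le_rfl).clm_comp contDiff_const),
      hasFDerivAt_intervalIntegral_of_contDiff (hψ.of_le (by simp))⟩

end ParametricIntegral

theorem intervalIntegral.integral_eq_integral_zero_one_comp_mul {E : Type*}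
    [NormedAddCommGroup E] [NormedSpace ℝ E] (f : ℝ → E) (b : ℝ) :
    ∫ t in 0..b, f t = ∫ s in 0..1, b • f (b * s) := by
  rw [integral_smul, smul_integral_comp_mul_left, mul_zero, mul_one]

theorem contDiff_update_prod {𝕜 ι : Type*} [NontriviallyNormedField 𝕜] [Fintype ι]
    [DecidableEq ι] {k : WithTop ℕ∞} (j : ι) :
    ContDiff 𝕜 k fun p : (ι → 𝕜) × 𝕜 => update p.1 j p.2 := by
  refine contDiff_pi.2 fun i => ?_
  by_cases h : i = j
  · subst h
    simpa using contDiff_snd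
  · simp only [update_of_ne h]
    exact (contDiff_apply 𝕜 𝕜 i).comp contDiff_fst

theorem hasDerivAt_integral_mul_cexp {f : ℝ → ℂ} (hf : Continuous f) (lam : ℂ) (s : ℝ) :
    HasDerivAt (fun s : ℝ => ∫ t in 0..s, f t * Complex.exp (lam * (s - t)))
      (lam * (∫ t in 0..s, f t * Complex.exp (lam * (s - t))) + f s) s := by
  have hsplit : ∀ s : ℝ, ∫ t in 0..s, f t * Complex.exp (lam * (s - t))
      = Complex.exp (lam * s) * ∫ t in 0..s, f t * Complex.exp (-(lam * t)) := by
    intro s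
    rw [← integral_const_mul]
    congr 1 with t
    rw [mul_sub, sub_eq_add_neg, Complex.exp_add]
    ring
  have hexp : HasDerivAt (fun s : ℝ => Complex.exp (lam * s)) (Complex.exp (lam * s) * lam) s := by
    simpa using (((hasDerivAt_id s).ofReal_comp).const_mul lam).cexp
  have hprim := (hf.mul (by fun_prop : Continuous fun t : ℝ => Complex.exp (-(lam * t))))
    |>.integral_hasStrictDerivAt 0 s |>.hasDerivAt
  rw [funext hsplit]
  refine (hexp.mul hprim).congr_deriv ?_
  have hinv : Complex.exp (lam * s) * Complex.exp (-(lam * s)) = 1 := by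
    rw [← Complex.exp_add, add_neg_cancel, Complex.exp_zero]
  rw [hsplit, Pi.mul_apply]
  linear_combination f s * hinv

section Stilde

variable {n : ℕ} (j : Fin n) (lam : ℂ)

theorem Stilde_eq_integral_zero_one (F : Rn n → ℂ) (x : Rn n) :
    Stilde n j lam F x = ∫ s in 0..1, (x j : ℂ) * (F (update x j (x j * s))
      * Complex.exp (lam * (x j - ↑(x j * s)))) := by
  rw [Stilde, integral_eq_integral_zero_one_comp_mul]
  simp only [Complex.real_smul]

theorem contDiff_Stilde {F : Rn n → ℂ} (hF : ContDiff ℝ ∞ F) :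
    ContDiff ℝ ∞ (Stilde n j lam F) := by
  rw [funext (Stilde_eq_integral_zero_one j lam F)]
  refine contDiff_intervalIntegral_of_contDiff (ψ := fun p : Rn n × ℝ =>
    (p.1 j : ℂ) * (F (update p.1 j (p.1 j * p.2)) * Complex.exp (lam * (p.1 j - ↑(p.1 j * p.2)))))
    ?_
  have hxj : ContDiff ℝ ∞ fun p : Rn n × ℝ => p.1 j := (contDiff_apply ℝ ℝ j).comp contDiff_fst
  have hxjs : ContDiff ℝ ∞ fun p : Rn n × ℝ => p.1 j * p.2 := hxj.mul contDiff_snd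
  have hofReal : ∀ {f : Rn n × ℝ → ℝ}, ContDiff ℝ ∞ f → ContDiff ℝ ∞ fun p => (f p : ℂ) :=
    fun hf => Complex.ofRealCLM.contDiff.comp hf
  refine (hofReal hxj).mul
    ((hF.comp ((contDiff_update_prod j).comp (contDiff_fst.prodMk hxjs))).mul ?_)
  exact Complex.contDiff_exp.comp (contDiff_const.mul ((hofReal hxj).sub (hofReal hxjs)))

theorem pd_Stilde {F : Rn n → ℂ} (hF : ContDiff ℝ ∞ F) (x : Rn n) :
    pd n j (Stilde n j lam F) x = lam * Stilde n j lam F x + F x := by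
  have hline : ∀ s, Stilde n j lam F (update x j s)
      = ∫ t in 0..s, F (update x j t) * Complex.exp (lam * (s - t)) := by
    intro s
    simp only [Stilde, update_self, update_idem]
  have hchain := ((contDiff_Stilde j lam hF).differentiable (by simp) x).hasFDerivAt
    |>.comp_hasDerivAt_of_eq (x j) (hasDerivAt_update x j (x j)) (update_eq_self j x).symm
  simp only [comp_def, hline] at hchain
  have hode := hasDerivAt_integral_mul_cexp (f := fun t => F (update x j t))
    (hF.continuous.comp (continuous_const.update j continuous_id)) lam (x j)
  rw [pd, hchain.unique hode, update_eq_self]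
  rfl

theorem Stilde_const_mul_add {F G : Rn n → ℂ} (hF : Continuous F) (hG : Continuous G) (c : ℂ) :
    Stilde n j lam (fun x => c * F x + G x) =
      fun x => c * Stilde n j lam F x + Stilde n j lam G x := by
  funext x
  have hcont : ∀ {H : Rn n → ℂ}, Continuous H →
      Continuous fun t : ℝ => H (update x j t) * Complex.exp (lam * (x j - t)) := fun hH =>
    (hH.comp (continuous_const.update j continuous_id)).mul (by fun_prop)
  simp only [Stilde]
  rw [← integral_const_mul, ← integral_add ((hcont hF).const_mul c |>.intervalIntegrable _ _)
    ((hcont hG).intervalIntegrable _ _)]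
  congr 1 with t
  ring

end Stilde

/-- For every smooth `F`, the function `S̃_{j,λ}F` is smooth
and `(D_j - λ)(S̃_{j,λ}F) = F`; that is, `S̃_{j,λ}` is a linear right inverse
for `D_j - λ` on `C^∞(ℝⁿ,ℂ)`. -/
theorem stmt11 (n : ℕ) (j : Fin n) (lam : ℂ) :
    -- `S̃_{j,λ}` is linear (on smooth functions)
    (∀ (c : ℂ) (F G : Rn n → ℂ), ContDiff ℝ ∞ F → ContDiff ℝ ∞ G →
      Stilde n j lam (fun x => c * F x + G x) =
        fun x => c * Stilde n j lam F x + Stilde n j lam G x) ∧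
    -- and it is a right inverse for `D_j - λ`
    ∀ F : Rn n → ℂ, ContDiff ℝ ∞ F →
      ContDiff ℝ ∞ (Stilde n j lam F) ∧
      (fun x => pd n j (Stilde n j lam F) x - lam * Stilde n j lam F x) = F := by
  refine ⟨fun c F G hF hG => Stilde_const_mul_add j lam hF.continuous hG.continuous c,
    fun F hF => ⟨contDiff_Stilde j lam hF, ?_⟩⟩
  funext x
  rw [pd_Stilde j lam hF x]
  ring
end
end

section
/- Let j ∈ {1,…,n} and let K ⊆ ℝ^n be a compact, e_j-normal set with a smooth surface. Then there exist a compact, e_j-normal set K_0 ⊆ ℝ^n with the zero surface and a smooth bijection Φ = (Φ_1,…,Φ_n) : ℝ^n → ℝ^n with smooth inverse Φ^{-1} = (Φ_1^{-1},…,Φ_n^{-1}) such that ∂_j Φ_l^{-1} ≡ 1 if l = j, ∂_j Φ_l^{-1} ≡ 0 if l ≠ j, and Φ(K_0) = K. -/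
/-
Common setup: the space `C^∞(ℝⁿ,ℂ)` of smooth complex-valued functions on `ℝⁿ`
with the Fréchet topology of uniform convergence of all partial derivatives on
compact sets, the ideal `𝓘_K` of functions flat on a compact set `K`, and the
space of Whitney functions `ℰ(K) = C^∞(ℝⁿ,ℂ)/𝓘_K` with the quotient topology.
-/

noncomputable section
open scoped ContDiff

/-- `K` is `v`-normal: for a compact `K_v` contained in the hyperplane `H_v`
orthogonal to `v` and functions `φ ≤ ψ` on `K_v`,
`K = {t•v + x : x ∈ K_v, t ∈ [φ x, ψ x]}`. -/
def VNormal (n : ℕ) (v : Rn n) (K : Set (Rn n)) : Prop :=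
  ∃ (Kv : Set (Rn n)) (φ ψ : Rn n → ℝ),
    IsCompact Kv ∧ (∀ x ∈ Kv, ∑ i, x i * v i = 0) ∧ (∀ x ∈ Kv, φ x ≤ ψ x) ∧
    K = {y | ∃ x ∈ Kv, ∃ t ∈ Set.Icc (φ x) (ψ x), y = t • v + x}

/-- `K` is `v`-normal with a smooth surface: in addition there is a smooth
`Γ : ℝⁿ → ℝ` with `φ ≤ Γ ≤ ψ` on `K_v`. -/
def VNormalSmooth (n : ℕ) (v : Rn n) (K : Set (Rn n)) : Prop :=
  ∃ (Kv : Set (Rn n)) (φ ψ : Rn n → ℝ) (Γ : Rn n → ℝ),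
    IsCompact Kv ∧ (∀ x ∈ Kv, ∑ i, x i * v i = 0) ∧ (∀ x ∈ Kv, φ x ≤ ψ x) ∧
    ContDiff ℝ ∞ Γ ∧ (∀ x ∈ Kv, φ x ≤ Γ x ∧ Γ x ≤ ψ x) ∧
    K = {y | ∃ x ∈ Kv, ∃ t ∈ Set.Icc (φ x) (ψ x), y = t • v + x}

/-- `K` is `v`-normal with the zero surface: `φ ≤ 0 ≤ ψ` on `K_v`. -/
def VNormalZero (n : ℕ) (v : Rn n) (K : Set (Rn n)) : Prop :=
  ∃ (Kv : Set (Rn n)) (φ ψ : Rn n → ℝ),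
    IsCompact Kv ∧ (∀ x ∈ Kv, ∑ i, x i * v i = 0) ∧ (∀ x ∈ Kv, φ x ≤ 0 ∧ 0 ≤ ψ x) ∧
    K = {y | ∃ x ∈ Kv, ∃ t ∈ Set.Icc (φ x) (ψ x), y = t • v + x}

/-!
The smooth surface `Γ` is straightened by a shear along `e_j`: with `π` the projection killing
the `j`-th coordinate, `Φ x = x + Γ (π x) • e_j` has inverse `Θ x = x - Γ (π x) • e_j`, because
`π` does not see the `e_j`-component that the shear changes. `Θ` moves each fibre
`[φ x, ψ x] • e_j + x` of `K` to `[φ x - Γ x, ψ x - Γ x] • e_j + x`, so `K₀ = Θ '' K` has the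
zero surface, and `∂_j Θ = e_j` because `Γ ∘ π` is constant along `e_j`.
-/

section Shear

variable {E : Type*} [NormedAddCommGroup E] [NormedSpace ℝ E]

def shear (Γ : E → ℝ) (π : E →L[ℝ] E) (c : E) (x : E) : E :=
  x + Γ (π x) • c

variable {Γ : E → ℝ} {π : E →L[ℝ] E} {c : E}

lemma map_shear (hπc : π c = 0) (x : E) : π (shear Γ π c x) = π x := by
  simp [shear, hπc]

lemma shear_neg_leftInverse (hπc : π c = 0) :
    Function.LeftInverse (shear (-Γ) π c) (shear Γ π c) := by
  intro x
  rw [shear, map_shear hπc, shear, Pi.neg_apply, neg_smul, add_neg_cancel_right]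

lemma shear_neg_rightInverse (hπc : π c = 0) :
    Function.RightInverse (shear (-Γ) π c) (shear Γ π c) := by
  have h := shear_neg_leftInverse (Γ := -Γ) hπc
  rwa [neg_neg] at h

lemma contDiff_shear {k : WithTop ℕ∞} (hΓ : ContDiff ℝ k Γ) : ContDiff ℝ k (shear Γ π c) :=
  contDiff_id.add ((hΓ.comp π.contDiff).smul contDiff_const)

lemma fderiv_shear_apply_self (hΓ : Differentiable ℝ Γ) (hπc : π c = 0) (x : E) :
    fderiv ℝ (shear Γ π c) x c = c := by
  have hΓπ : HasFDerivAt (fun y => Γ (π y)) ((fderiv ℝ Γ (π x)).comp π) x :=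
    (hΓ (π x)).hasFDerivAt.comp x π.hasFDerivAt
  have hshear : HasFDerivAt (shear Γ π c) _ x := (hasFDerivAt_id x).add (hΓπ.smul_const c)
  rw [hshear.fderiv]
  simp [hπc]

lemma shear_smul_add (hπc : π c = 0) {x : E} (hx : π x = x) (t : ℝ) :
    shear Γ π c (t • c + x) = (t + Γ x) • c + x := by
  rw [shear, map_add, map_smul, hπc, smul_zero, zero_add, hx, add_smul]
  abel

lemma image_shear_normal (hπc : π c = 0) {Kv : Set E} (hKv : ∀ x ∈ Kv, π x = x)
    (φ ψ : E → ℝ) :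
    shear Γ π c '' {y | ∃ x ∈ Kv, ∃ t ∈ Set.Icc (φ x) (ψ x), y = t • c + x} =
      {y | ∃ x ∈ Kv, ∃ t ∈ Set.Icc (φ x + Γ x) (ψ x + Γ x), y = t • c + x} := by
  ext y
  constructor
  · rintro ⟨_, ⟨x, hx, t, ⟨htφ, htψ⟩, rfl⟩, rfl⟩
    exact ⟨x, hx, t + Γ x, ⟨by linarith, by linarith⟩, shear_smul_add hπc (hKv x hx) t⟩
  · rintro ⟨x, hx, t, ⟨htφ, htψ⟩, rfl⟩
    refine ⟨(t - Γ x) • c + x, ⟨x, hx, t - Γ x, ⟨by linarith, by linarith⟩, rfl⟩, ?_⟩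
    rw [shear_smul_add hπc (hKv x hx), sub_add_cancel]

end Shear

section EraseCoord

variable {ι : Type*} [DecidableEq ι]

def eraseCoord (j : ι) : (ι → ℝ) →L[ℝ] (ι → ℝ) :=
  ContinuousLinearMap.id ℝ _ - (ContinuousLinearMap.proj j).smulRight (Pi.single j 1)

lemma eraseCoord_apply (j : ι) (x : ι → ℝ) : eraseCoord j x = x - x j • Pi.single j 1 := rfl

lemma eraseCoord_single (j : ι) : eraseCoord j (Pi.single j 1) = 0 := by
  simp [eraseCoord_apply]

lemma eraseCoord_of_apply_eq_zero {j : ι} {x : ι → ℝ} (hx : x j = 0) : eraseCoord j x = x := by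
  simp [eraseCoord_apply, hx]

lemma sum_mul_single_one [Fintype ι] (j : ι) (x : ι → ℝ) :
    ∑ i, x i * (Pi.single j 1 : ι → ℝ) i = x j := by
  simp [Pi.single_apply]

end EraseCoord

/-- If `K ⊆ ℝⁿ` is a compact, `e_j`-normal set with a smooth
surface, then there are a compact, `e_j`-normal set `K₀ ⊆ ℝⁿ` with the zero
surface and a smooth bijection `Φ : ℝⁿ → ℝⁿ` with smooth inverse `Θ = Φ⁻¹`
satisfying `∂_j Θ_l ≡ 1` for `l = j` and `∂_j Θ_l ≡ 0` for `l ≠ j` (i.e. the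
derivative of `Θ` in direction `e_j` is constantly `e_j`), such that
`Φ(K₀) = K`. -/
theorem stmt15 (n : ℕ) (j : Fin n) (K : Set (Rn n)) (hK : IsCompact K)
    (hKn : VNormalSmooth n (Pi.single j 1) K) :
    ∃ (K₀ : Set (Rn n)) (Φ Θ : Rn n → Rn n),
      IsCompact K₀ ∧ VNormalZero n (Pi.single j 1) K₀ ∧
      ContDiff ℝ ∞ Φ ∧ ContDiff ℝ ∞ Θ ∧
      Function.LeftInverse Θ Φ ∧ Function.RightInverse Θ Φ ∧
      (∀ x : Rn n, fderiv ℝ Θ x (Pi.single j 1) = Pi.single j 1) ∧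
      Φ '' K₀ = K := by
  obtain ⟨Kv, φ, ψ, Γ, hKvc, hKvj, -, hΓ, hΓbd, rfl⟩ := hKn
  have hπc := eraseCoord_single j
  have hπKv : ∀ x ∈ Kv, eraseCoord j x = x := fun x hx =>
    eraseCoord_of_apply_eq_zero (by simpa only [sum_mul_single_one] using hKvj x hx)
  set Φ := shear Γ (eraseCoord j) (Pi.single j 1)
  set Θ := shear (-Γ) (eraseCoord j) (Pi.single j 1)
  have hΘs : ContDiff ℝ ∞ Θ := contDiff_shear hΓ.neg
  refine ⟨Θ '' _, Φ, Θ, hK.image hΘs.continuous, ?_, contDiff_shear hΓ, hΘs,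
    shear_neg_leftInverse hπc, shear_neg_rightInverse hπc,
    fderiv_shear_apply_self (hΓ.neg.differentiable (by simp)) hπc,
    (shear_neg_rightInverse hπc).image_image _⟩
  exact ⟨Kv, fun x => φ x + -Γ x, fun x => ψ x + -Γ x, hKvc, hKvj,
    fun x hx => ⟨by linarith [hΓbd x hx], by linarith [hΓbd x hx]⟩,
    image_shear_normal hπc hπKv φ ψ⟩
end
end

section
/- Let n ≥ 1, let f : ℝ^{n−1} → ℝ be a smooth function, let K_0 ⊆ ℝ^{n−1} be a nonempty compact set, and let K := {(x_1,…,x_{n−1}, f(x_1,…,x_{n−1})) : (x_1,…,x_{n−1}) ∈ K_0} ⊆ ℝ^n. Then the space of Whitney functions ℰ(K) does not admit a continuous norm; that is, for every continuous seminorm p on ℰ(K) there exists a nonzero element g ∈ ℰ(K) with p(g) = 0. -/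
/-
Common setup: the space `C^∞(ℝⁿ,ℂ)` of smooth complex-valued functions on `ℝⁿ`
with the Fréchet topology of uniform convergence of all partial derivatives on
compact sets, the ideal `𝓘_K` of functions flat on a compact set `K`, and the
space of Whitney functions `ℰ(K) = C^∞(ℝⁿ,ℂ)/𝓘_K` with the quotient topology.
-/

noncomputable section
open scoped ContDiff

/-!
Let `t(x', xₙ) = xₙ - f(x')`, which vanishes on `K` and increases with unit speed along `eₙ`.
A continuous seminorm `p` on `ℰ(K)` is bounded by `C · sup_{k ≤ N, x ∈ L} ‖Dᵏ F(x)‖` for some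
order `N` and compact set `L`. The class of `tᴺ⁺¹` is nonzero, as its `(N+1)`-st derivative does
not vanish on `K`. But for every `c ≥ 1` it is also the class of `χ(c t) tᴺ⁺¹` with a cutoff `χ`
equal to `1` near `0`, and the derivatives of order `≤ N` of this representative are `O(1/c)`
on `L`. Hence `p [tᴺ⁺¹] = 0`.
-/

open Filter Topology Set
open scoped UniformConvergence

namespace SmoothFun

variable {n : ℕ}

theorem exists_subset_of_mem_nhds_zero {U : Set (SmoothFun n)} (hU : U ∈ 𝓝 0) :
    ∃ (N : ℕ) (L : Set (Rn n)) (δ : ℝ), IsCompact L ∧ 0 < δ ∧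
      {F : SmoothFun n | ∀ k ≤ N, ∀ x ∈ L, ‖iteratedFDeriv ℝ k F.1 x‖ < δ} ⊆ U := by
  let Φ : SmoothFun n → ∀ k : ℕ, Rn n →ᵤ[{L | IsCompact L}] ContinuousMultilinearMap ℝ
      (fun _ : Fin k => Rn n) ℂ :=
    fun F k => UniformOnFun.ofFun _ (iteratedFDeriv ℝ k F.1)
  have hΦ0 : Φ 0 = 0 := funext fun k => congrArg (UniformOnFun.ofFun _) iteratedFDeriv_zero
  rw [show 𝓝 (0 : SmoothFun n) = comap Φ (𝓝 0) from hΦ0 ▸ nhds_induced Φ 0] at hU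
  obtain ⟨V, hV, hVU⟩ := hU
  rw [nhds_pi, Filter.mem_pi] at hV
  obtain ⟨I, hI, W, hW, hIW⟩ := hV
  choose Lδ hLδ hLδW using fun k => ((UniformOnFun.hasBasis_nhds_zero_of_basis
    {L : Set (Rn n) | IsCompact L} ⟨∅, isCompact_empty⟩
    (directedOn_of_sup_mem fun _ _ => IsCompact.union) Metric.nhds_basis_ball).mem_iff.1 (hW k))
  obtain ⟨N, hN⟩ := hI.bddAbove
  have hsmall : ∀ᶠ δ in 𝓝[>] (0 : ℝ), ∀ k ∈ I, δ < (Lδ k).2 :=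
    (eventually_all_finite hI).2 fun k _ => nhdsWithin_le_nhds (eventually_lt_nhds (hLδ k).2)
  obtain ⟨δ, hδI, hδ⟩ := (hsmall.and self_mem_nhdsWithin).exists
  refine ⟨N, ⋃ k ∈ I, (Lδ k).1, δ, hI.isCompact_biUnion fun k _ => (hLδ k).1, hδ,
    fun F hF => hVU (hIW fun k hk => hLδW k fun x hx => ?_)⟩
  rw [mem_ball_zero_iff]
  exact (hF k (hN hk) x (mem_biUnion hk hx)).trans (hδI k hk)

theorem exists_bound_of_continuous_seminorm (q : Seminorm ℂ (SmoothFun n)) (hq : Continuous q) :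
    ∃ (N : ℕ) (L : Set (Rn n)) (C : ℝ), IsCompact L ∧ ∀ (F : SmoothFun n) (ε : ℝ), 0 ≤ ε →
      (∀ k ≤ N, ∀ x ∈ L, ‖iteratedFDeriv ℝ k F.1 x‖ ≤ ε) → q F ≤ C * ε := by
  obtain ⟨N, L, δ, hL, hδ, hsub⟩ :=
    exists_subset_of_mem_nhds_zero ((isOpen_lt hq continuous_const).mem_nhds (by simp : q 0 < 1))
  refine ⟨N, L, δ⁻¹, hL, fun F ε hε hF => ?_⟩
  rw [inv_mul_eq_div, le_div_iff₀ hδ]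
  refine le_of_forall_gt_imp_ge_of_dense fun r hr => ?_
  have hr0 : 0 < r := hε.trans_lt hr
  have hqs : q (((δ / r : ℝ) : ℂ) • F) < 1 := hsub fun k hk x hx => by
    rw [Submodule.coe_smul, iteratedFDeriv_const_smul_apply (F.smoothNat k).contDiffAt, norm_smul,
      Complex.norm_real, Real.norm_of_nonneg (by positivity)]
    calc δ / r * ‖iteratedFDeriv ℝ k F.1 x‖ ≤ δ / r * ε := by gcongr; exact hF k hk x hx
      _ < δ / r * r := by gcongr
      _ = δ := div_mul_cancel₀ δ hr0.ne'
  rw [map_smul_eq_mul, Complex.norm_real, Real.norm_of_nonneg (by positivity), div_mul_eq_mul_div,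
    div_lt_one hr0] at hqs
  linarith

end SmoothFun

section Calculus

variable {E F : Type*} [NormedAddCommGroup E] [NormedSpace ℝ E]
  [NormedAddCommGroup F] [NormedSpace ℝ F]

theorem exists_bound_iteratedFDeriv_of_bddAbove {g : E → F} {L : Set E}
    (h : ∀ k, BddAbove ((fun x => ‖iteratedFDeriv ℝ k g x‖) '' L)) (N : ℕ) :
    ∃ C, 1 ≤ C ∧ ∀ k ≤ N, ∀ x ∈ L, ‖iteratedFDeriv ℝ k g x‖ ≤ C := by
  have hbound : ∀ k, ∀ᶠ C in atTop, ∀ x ∈ L, ‖iteratedFDeriv ℝ k g x‖ ≤ C := fun k => by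
    obtain ⟨C, hC⟩ := h k
    exact (eventually_ge_atTop C).mono fun C' hC' x hx => (hC (mem_image_of_mem _ hx)).trans hC'
  obtain ⟨C, hC, hC1⟩ :=
    (((eventually_all_finset (Finset.range (N + 1))).2 fun k _ => hbound k).and
      (eventually_ge_atTop 1)).exists
  exact ⟨C, hC1, fun k hk => hC k (Finset.mem_range_succ_iff.2 hk)⟩

theorem ContDiff.exists_bound_iteratedFDeriv_of_isCompact {g : E → F} (hg : ContDiff ℝ ∞ g)
    {L : Set E} (hL : IsCompact L) (N : ℕ) :
    ∃ C, 1 ≤ C ∧ ∀ k ≤ N, ∀ x ∈ L, ‖iteratedFDeriv ℝ k g x‖ ≤ C :=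
  exists_bound_iteratedFDeriv_of_bddAbove (fun _ => hL.bddAbove_image
    (hg.continuous_iteratedFDeriv (mod_cast le_top)).norm.continuousOn) N

theorem ContDiff.exists_bound_iteratedFDeriv_of_hasCompactSupport {g : E → F}
    (hg : ContDiff ℝ ∞ g) (hsupp : HasCompactSupport g) (N : ℕ) :
    ∃ C, 1 ≤ C ∧ ∀ k ≤ N, ∀ x, ‖iteratedFDeriv ℝ k g x‖ ≤ C := by
  simpa using exists_bound_iteratedFDeriv_of_bddAbove (L := univ) (fun k => by
    simpa only [image_univ] using (hg.continuous_iteratedFDeriv (mod_cast le_top)).norm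
      |>.bddAbove_range_of_hasCompactSupport (hsupp.iteratedFDeriv k).norm) N

end Calculus

section BumpPow

def unitCutoff : ContDiffBump (0 : ℝ) := ⟨1, 2, one_pos, one_lt_two⟩

def bumpPow (n : ℕ) (u : ℝ) : ℝ := unitCutoff u * u ^ n

def rescaledBumpPow (n : ℕ) (c u : ℝ) : ℝ := bumpPow n (c * u) / c ^ n

variable {n : ℕ}

theorem contDiff_bumpPow (n : ℕ) : ContDiff ℝ ∞ (bumpPow n) :=
  unitCutoff.contDiff.mul (contDiff_id.pow n)

theorem hasCompactSupport_bumpPow (n : ℕ) : HasCompactSupport (bumpPow n) :=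
  unitCutoff.hasCompactSupport.mul_right

theorem bumpPow_of_abs_le_one {u : ℝ} (hu : |u| ≤ 1) : bumpPow n u = u ^ n := by
  rw [bumpPow, unitCutoff.one_of_mem_closedBall (by simpa [unitCutoff] using hu), one_mul]

theorem contDiff_rescaledBumpPow (n : ℕ) (c : ℝ) : ContDiff ℝ ∞ (rescaledBumpPow n c) :=
  ((contDiff_bumpPow n).comp (contDiff_const.mul contDiff_id)).div_const _

theorem rescaledBumpPow_of_abs_mul_le_one {c u : ℝ} (hc : c ≠ 0) (hu : |c * u| ≤ 1) :
    rescaledBumpPow n c u = u ^ n := by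
  rw [rescaledBumpPow, bumpPow_of_abs_le_one hu, mul_pow, mul_div_cancel_left₀ _ (pow_ne_zero n hc)]

theorem rescaledBumpPow_comp_eventuallyEq {X : Type*} [TopologicalSpace X] {t : X → ℝ}
    (ht : Continuous t) {c : ℝ} (hc : c ≠ 0) {y : X} (hy : t y = 0) :
    rescaledBumpPow n c ∘ t =ᶠ[𝓝 y] fun x => t x ^ n := by
  have hnear : ∀ᶠ x in 𝓝 y, |c * t x| < 1 :=
    (continuous_const.mul ht).abs.continuousAt.eventually_lt continuousAt_const (by simp [hy])
  filter_upwards [hnear] with x hx using rescaledBumpPow_of_abs_mul_le_one hc hx.le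

theorem exists_norm_iteratedFDeriv_rescaledBumpPow_le (n : ℕ) :
    ∃ C, 0 ≤ C ∧ ∀ c ≥ (1 : ℝ), ∀ j < n, ∀ u,
      ‖iteratedFDeriv ℝ j (rescaledBumpPow n c) u‖ ≤ C / c := by
  obtain ⟨C, hC1, hC⟩ := (contDiff_bumpPow n).exists_bound_iteratedFDeriv_of_hasCompactSupport
    (hasCompactSupport_bumpPow n) n
  refine ⟨C, by linarith, fun c hc j hj u => ?_⟩
  have hc0 : 0 < c := by linarith
  have hderiv : ‖iteratedDeriv j (bumpPow n) (c * u)‖ ≤ C := by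
    rw [← norm_iteratedFDeriv_eq_norm_iteratedDeriv]
    exact hC j hj.le _
  rw [norm_iteratedFDeriv_eq_norm_iteratedDeriv]
  change ‖iteratedDeriv j (fun u => bumpPow n (c * u) / c ^ n) u‖ ≤ C / c
  rw [iteratedDeriv_div_const, iteratedDeriv_comp_const_mul ((contDiff_bumpPow n).of_le
    (mod_cast le_top)), norm_div, norm_mul, norm_pow, norm_pow, Real.norm_of_nonneg hc0.le,
    div_le_div_iff₀ (by positivity) hc0]
  calc c ^ j * ‖iteratedDeriv j (bumpPow n) (c * u)‖ * c ≤ c ^ j * C * c := by gcongr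
    _ = C * c ^ (j + 1) := by ring
    _ ≤ C * c ^ n := by gcongr; exact hj

end BumpPow

section Composition

variable {E : Type*} [NormedAddCommGroup E] [NormedSpace ℝ E] {t : E → ℝ}

theorem exists_bound_iteratedFDeriv_rescaledBumpPow_comp (ht : ContDiff ℝ ∞ t) {L : Set E}
    (hL : IsCompact L) (n : ℕ) :
    ∃ B, 0 ≤ B ∧ ∀ c ≥ (1 : ℝ), ∀ k < n, ∀ x ∈ L,
      ‖iteratedFDeriv ℝ k (rescaledBumpPow n c ∘ t) x‖ ≤ B / c := by
  obtain ⟨C, hC0, hC⟩ := exists_norm_iteratedFDeriv_rescaledBumpPow_le n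
  obtain ⟨D, hD1, hD⟩ := ht.exists_bound_iteratedFDeriv_of_isCompact hL n
  refine ⟨n.factorial * C * D ^ n, by positivity, fun c hc k hk x hx => ?_⟩
  calc ‖iteratedFDeriv ℝ k (rescaledBumpPow n c ∘ t) x‖ ≤ k.factorial * (C / c) * D ^ k :=
        norm_iteratedFDeriv_comp_le (contDiff_rescaledBumpPow n c) ht (mod_cast le_top) x
          (fun i hi => hC c hc i (hi.trans_lt hk) _)
          (fun i hi1 hi2 => (hD i (hi2.trans hk.le) x hx).trans (le_self_pow₀ hD1 (by omega)))
    _ ≤ n.factorial * (C / c) * D ^ n := by gcongr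
    _ = n.factorial * C * D ^ n / c := by ring

theorem iteratedFDeriv_pow_ne_zero (ht : ContDiff ℝ ∞ t) {x₀ v : E}
    (hline : ∀ s : ℝ, t (x₀ + s • v) = s) (n : ℕ) :
    iteratedFDeriv ℝ n (fun x => t x ^ n) x₀ ≠ 0 := by
  intro h
  let A : ℝ →L[ℝ] E := (ContinuousLinearMap.id ℝ ℝ).smulRight v
  have hcomp : (fun s : ℝ => s ^ n) = (fun z => t (x₀ + z) ^ n) ∘ A := by
    funext s; simp [A, hline]
  have hshift : ContDiff ℝ ∞ (fun z => t (x₀ + z) ^ n) :=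
    (ht.comp (contDiff_const.add contDiff_id)).pow n
  have hzero : iteratedDeriv n (fun s : ℝ => s ^ n) 0 = 0 := by
    rw [iteratedDeriv_eq_iteratedFDeriv, hcomp,
      A.iteratedFDeriv_comp_right hshift 0 (mod_cast le_top),
      iteratedFDeriv_comp_add_left (f := fun x => t x ^ n), map_zero, add_zero, h]
    rfl
  simp at hzero

end Composition

namespace SmoothFun

variable {n : ℕ}

def ofReal (g : Rn n → ℝ) (hg : ContDiff ℝ ∞ g) : SmoothFun n :=
  ⟨fun x => (g x : ℂ), Complex.ofRealCLM.contDiff.comp hg⟩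

theorem norm_iteratedFDeriv_ofReal {g : Rn n → ℝ} (hg : ContDiff ℝ ∞ g) (k : ℕ) (x : Rn n) :
    ‖iteratedFDeriv ℝ k (ofReal g hg).1 x‖ = ‖iteratedFDeriv ℝ k g x‖ :=
  Complex.ofRealLI.norm_iteratedFDeriv_comp_left hg.contDiffAt (mod_cast le_top)

theorem sub_mem_idealK_of_eventuallyEq {K : Set (Rn n)} {F G : SmoothFun n}
    (h : ∀ y ∈ K, F.1 =ᶠ[𝓝 y] G.1) : F - G ∈ IdealK n K := fun k y hy => by
  change iteratedFDeriv ℝ k (F.1 - G.1) y = 0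
  rw [((h y hy).sub_eq.iteratedFDeriv ℝ k).eq_of_nhds, iteratedFDeriv_zero]
  rfl

theorem ofReal_notMem_idealK {g : Rn n → ℝ} (hg : ContDiff ℝ ∞ g) {K : Set (Rn n)} {x : Rn n}
    (hx : x ∈ K) {k : ℕ} (hk : iteratedFDeriv ℝ k g x ≠ 0) : ofReal g hg ∉ IdealK n K := by
  intro hflat
  rw [← norm_ne_zero_iff, ← norm_iteratedFDeriv_ofReal hg] at hk
  exact hk (norm_eq_zero.2 (hflat k x hx))

end SmoothFun

section NormalCoord

variable {m : ℕ} {f : Rn m → ℝ}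

def normalCoord (f : Rn m → ℝ) (x : Rn (m + 1)) : ℝ :=
  x (Fin.last m) - f (fun l => x l.castSucc)

theorem contDiff_normalCoord (hf : ContDiff ℝ ∞ f) : ContDiff ℝ ∞ (normalCoord f) :=
  (contDiff_apply ℝ ℝ (Fin.last m)).sub
    (hf.comp (contDiff_pi.2 fun l => contDiff_apply ℝ ℝ l.castSucc))

theorem normalCoord_graph_add_smul (x : Rn m) (s : ℝ) :
    normalCoord f ((fun i : Fin (m + 1) => Fin.lastCases (f x) (fun l : Fin m => x l) i) +
      s • Pi.single (Fin.last m) 1) = s := by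
  simp [normalCoord]

theorem normalCoord_graph (x : Rn m) :
    normalCoord f (fun i : Fin (m + 1) => Fin.lastCases (f x) (fun l : Fin m => x l) i) = 0 := by
  simpa using normalCoord_graph_add_smul (f := f) x 0

end NormalCoord

theorem stmt17_general (m : ℕ) (f : Rn m → ℝ) (hf : ContDiff ℝ ∞ f)
    (K₀ : Set (Rn m)) (hK₀ne : K₀.Nonempty)
    (K : Set (Rn (m + 1)))
    (hK : K = (fun x : Rn m =>
      (fun i : Fin (m + 1) => Fin.lastCases (f x) (fun l : Fin m => x l) i)) '' K₀) :
    ∀ p : Seminorm ℂ (WhitneyE (m + 1) K), Continuous p →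
      ∃ g : WhitneyE (m + 1) K, g ≠ 0 ∧ p g = 0 := by
  intro p hp
  have ht : ContDiff ℝ ∞ (normalCoord f) := contDiff_normalCoord hf
  obtain ⟨N, L, C, hL, hC⟩ := SmoothFun.exists_bound_of_continuous_seminorm
    (p.comp (IdealK (m + 1) K).mkQ) (hp.comp continuous_quot_mk)
  obtain ⟨B, hB0, hB⟩ := exists_bound_iteratedFDeriv_rescaledBumpPow_comp ht hL (N + 1)
  let F := SmoothFun.ofReal (fun x => normalCoord f x ^ (N + 1)) (ht.pow _)
  let G (c : ℝ) := SmoothFun.ofReal _ ((contDiff_rescaledBumpPow (N + 1) c).comp ht)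
  have hGF (c : ℝ) (hc : c ≠ 0) :
      (Submodule.Quotient.mk (G c) : WhitneyE (m + 1) K) = Submodule.Quotient.mk F := by
    refine (Submodule.Quotient.eq _).2 (SmoothFun.sub_mem_idealK_of_eventuallyEq fun y hy => ?_)
    obtain ⟨x, -, rfl⟩ := hK ▸ hy
    exact (rescaledBumpPow_comp_eventuallyEq ht.continuous hc (normalCoord_graph x)).fun_comp
      ((↑) : ℝ → ℂ)
  obtain ⟨x₀, hx₀⟩ := hK₀ne
  have hF : (Submodule.Quotient.mk F : WhitneyE (m + 1) K) ≠ 0 := by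
    rw [Ne, Submodule.Quotient.mk_eq_zero]
    exact SmoothFun.ofReal_notMem_idealK _ (hK ▸ mem_image_of_mem _ hx₀)
      (iteratedFDeriv_pow_ne_zero ht (normalCoord_graph_add_smul x₀) (N + 1))
  refine ⟨_, hF, le_antisymm ?_ (apply_nonneg p _)⟩
  refine ge_of_tendsto (tendsto_const_nhds.div_atTop tendsto_id :
    Tendsto (fun c : ℝ => C * B / c) atTop (𝓝 0)) ?_
  filter_upwards [eventually_ge_atTop 1] with c hc
  rw [← hGF c (by positivity), mul_div_assoc]
  exact hC (G c) _ (by positivity) fun k hk x hx => by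
    rw [SmoothFun.norm_iteratedFDeriv_ofReal]
    exact hB c hc k (Nat.lt_succ_of_le hk) x hx

/-- (With `m = n - 1`, `n ≥ 1`.) Let `f : ℝᵐ → ℝ` be smooth,
let `K₀ ⊆ ℝᵐ` be a nonempty compact set, and let
`K = {(x, f(x)) : x ∈ K₀} ⊆ ℝ^{m+1}` be the corresponding graph. Then `ℰ(K)`
admits no continuous norm: every continuous seminorm on `ℰ(K)` vanishes at some
nonzero element. -/
theorem stmt17 (m : ℕ) (f : Rn m → ℝ) (hf : ContDiff ℝ ∞ f)
    (K₀ : Set (Rn m)) (hK₀c : IsCompact K₀) (hK₀ne : K₀.Nonempty)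
    (K : Set (Rn (m + 1)))
    (hK : K = (fun x : Rn m =>
      (fun i : Fin (m + 1) => Fin.lastCases (f x) (fun l : Fin m => x l) i)) '' K₀) :
    ∀ p : Seminorm ℂ (WhitneyE (m + 1) K), Continuous p →
      ∃ g : WhitneyE (m + 1) K, g ≠ 0 ∧ p g = 0 :=
  stmt17_general m f hf K₀ hK₀ne K hK
end
end
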